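/- An identity u ≈ v holds in the six-element monoid Q^1 and in every idempotent monoid (i.e., every monoid satisfying x ≈ x²) if and only if u ≈ v is a consequence of Γ = {xtx ≈ xtx², xtx ≈ x²tx, (xy)² ≈ x²y²}. Equivalently, Q^1 ∨ B^1 = var Γ, where B^1 is the variety of all idempotent monoids. -/

import Mathlib

/-- A word over the fixed countably infinite alphabet ℕ. -/
abbrev Word : Type := List ℕ

/-- An identity `u ≈ v` is a pair of words. -/
abbrev Eqn : Type := Word × Word

/-- A monoid `M` satisfies the identity `e` if every evaluation of letters in `M`
gives the same value to both sides. -/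
def Satisfies (M : Type) [Monoid M] (e : Eqn) : Prop :=
  ∀ φ : ℕ → M, (e.1.map φ).prod = (e.2.map φ).prod

/-- A monoid `M` satisfies a set of identities `S` if it satisfies each member. -/
def SatisfiesSet (M : Type) [Monoid M] (S : Set Eqn) : Prop :=
  ∀ e ∈ S, Satisfies M e

/-- The identity `e` is a consequence of `S` (holds in the variety `var S`)
if every monoid satisfying `S` satisfies `e`. -/
def Consequence (S : Set Eqn) (e : Eqn) : Prop :=
  ∀ (M : Type) [Monoid M], SatisfiesSet M S → Satisfies M e

/-- The six-element monoid `Q¹ = {1, e, b, c, f, 0}`. -/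
inductive Q1 : Type
  | one | e | b | c | f | zero
deriving DecidableEq

instance : Fintype Q1 :=
  ⟨{.one, .e, .b, .c, .f, .zero}, by intro x; cases x <;> simp⟩

/-- Multiplication of `Q¹`: `e·e = e`, `e·b = b`, `c·e = c`, `b·c = f`,
`e·f = f·e = f`, and all remaining products of elements from `{e,b,c,f}` are `0`. -/
def Q1.mul : Q1 → Q1 → Q1
  | .one, x => x
  | x, .one => x
  | .e, .e => .e
  | .e, .b => .b
  | .c, .e => .c
  | .b, .c => .f
  | .e, .f => .f
  | .f, .e => .f
  | _, _ => .zero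

instance : Monoid Q1 where
  mul := Q1.mul
  one := Q1.one
  mul_assoc := by decide
  one_mul := by decide
  mul_one := by decide

/-- `Γ = {xtx ≈ xtx², xtx ≈ x²tx, (xy)² ≈ x²y²}`, with `x = 0`, `y = 1`, `t = 4`. -/
def Gamma : Set Eqn :=
  {([0, 4, 0], [0, 4, 0, 0]), ([0, 4, 0], [0, 0, 4, 0]), ([0, 1, 0, 1], [0, 0, 1, 1])}


/-!
An identity `u ≈ v` holds in every band iff `u` and `v` are equal in the free band, and if it
holds in `Q¹`, then `u` and `v` have the same simple letters (those occurring exactly once):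
evaluating a letter `z` at `f` and every other letter at `1` gives `f ^ (number of z's)`, which
is `f` exactly when `z` is simple. Conversely, let `u` and `v` be band-equivalent with the same
simple letters, and place them between context words `X` and `Y`. If some letter `z` of `u`
outside the context is simple, cut `u` and `v` at `z`; the prefixes and the suffixes are again
band-equivalent, and induction applies to each with the rest of the word as new context. If no
such letter exists, `Γ` gives `XuY = XuuY` and `XvY = XvvY`, and in `XuuY` one copy of `u` may
be replaced by the band-equivalent `v` because all of its letters already occur in the context.
-/

class IsGammaMonoid (M : Type*) [Monoid M] : Prop where
  mul_mul_self_right : ∀ x t : M, x * t * x * x = x * t * x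
  mul_self_mul_left : ∀ x t : M, x * x * t * x = x * t * x
  mul_mul_mul_self : ∀ x y : M, x * y * (x * y) = x * x * (y * y)

theorem isGammaMonoid_iff_satisfiesSet {M : Type} [Monoid M] :
    IsGammaMonoid M ↔ SatisfiesSet M Gamma := by
  constructor
  · intro hM e he φ
    simp only [Gamma, Set.mem_insert_iff, Set.mem_singleton_iff] at he
    rcases he with rfl | rfl | rfl <;>
      simp only [List.map_cons, List.map_nil, List.prod_cons, List.prod_nil, mul_one, ← mul_assoc]
    · exact (hM.mul_mul_self_right _ _).symm
    · exact (hM.mul_self_mul_left _ _).symm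
    · simpa only [mul_assoc] using hM.mul_mul_mul_self (φ 0) (φ 1)
  · intro hM
    have law : ∀ e ∈ Gamma, ∀ x y : M,
        (e.1.map fun k => if k = 0 then x else y).prod =
          (e.2.map fun k => if k = 0 then x else y).prod := fun e he _ _ => hM e he _
    refine ⟨fun x t => ?_, fun x t => ?_, fun x y => ?_⟩
    · simpa [mul_assoc] using (law ([0, 4, 0], [0, 4, 0, 0]) (by simp [Gamma]) x t).symm
    · simpa [mul_assoc] using (law ([0, 4, 0], [0, 0, 4, 0]) (by simp [Gamma]) x t).symm
    · simpa [mul_assoc] using law ([0, 1, 0, 1], [0, 0, 1, 1]) (by simp [Gamma]) x y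

instance : IsGammaMonoid Q1 := ⟨by decide, by decide, by decide⟩

theorem IsGammaMonoid.of_mul_self {M : Type*} [Monoid M] (h : ∀ x : M, x * x = x) :
    IsGammaMonoid M where
  mul_mul_self_right x t := by rw [mul_assoc, h]
  mul_self_mul_left x t := by rw [h]
  mul_mul_mul_self x y := by rw [h, h, h]

theorem Q1.f_pow_eq_f_iff (n : ℕ) : Q1.f ^ n = Q1.f ↔ n = 1 := by
  match n with
  | 0 => decide
  | 1 => simp
  | n + 2 =>
    have hf : Q1.f ^ 2 = Q1.zero := by decide
    have hzero : ∀ x : Q1, x * Q1.zero = Q1.zero := by decide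
    simp [pow_add, hf, hzero]

theorem count_eq_one_iff_of_satisfies_Q1 {u v : Word} (h : Satisfies Q1 (u, v)) (z : ℕ) :
    u.count z = 1 ↔ v.count z = 1 := by
  have hz := h fun m => if m = z then Q1.f else 1
  simp only [List.prod_map_eq_pow_single z _ fun m hm _ => if_neg hm, if_pos] at hz
  rw [← Q1.f_pow_eq_f_iff, ← Q1.f_pow_eq_f_iff, hz]

theorem List.takeWhile_ne_append_of_mem {α : Type*} [DecidableEq α] {z : α} {a : List α}
    (b : List α) (h : z ∈ a) :
    (a ++ b).takeWhile (· ≠ z) = a.takeWhile (· ≠ z) := by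
  induction a with
  | nil => simp at h
  | cons x a ih =>
    by_cases hx : x = z
    · simp [hx]
    · simp only [List.mem_cons, Ne.symm hx, false_or] at h
      rw [List.cons_append, List.takeWhile_cons_of_pos (p := (· ≠ z)) (by simpa using hx),
        List.takeWhile_cons_of_pos (p := (· ≠ z)) (by simpa using hx), ih h]

theorem List.takeWhile_ne_append_cons {α : Type*} [DecidableEq α] {z : α} {s : List α}
    (t : List α) (h : z ∉ s) :
    (s ++ z :: t).takeWhile (· ≠ z) = s := by
  rw [List.takeWhile_append_of_pos fun x hx => by simpa using ne_of_mem_of_not_mem hx h]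
  simp

theorem List.exists_append_cons_of_count_eq_one {α : Type*} [DecidableEq α] {z : α} {u : List α}
    (h : u.count z = 1) :
    ∃ s t, u = s ++ z :: t ∧ z ∉ s ∧ z ∉ t := by
  obtain ⟨s, t, rfl⟩ := List.append_of_mem (List.count_pos_iff.1 (by omega : 0 < u.count z))
  simp only [List.count_append, List.count_cons_self] at h
  exact ⟨s, t, rfl, List.count_eq_zero.1 (by omega), List.count_eq_zero.1 (by omega)⟩

inductive BandEquiv : Word → Word → Prop
  | sq (w : Word) : BandEquiv w (w ++ w)
  | refl (u : Word) : BandEquiv u u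
  | symm {u v : Word} : BandEquiv u v → BandEquiv v u
  | trans {u v w : Word} : BandEquiv u v → BandEquiv v w → BandEquiv u w
  | append {a b c d : Word} : BandEquiv a b → BandEquiv c d → BandEquiv (a ++ c) (b ++ d)

namespace BandEquiv

theorem mem_iff {u v : Word} (h : BandEquiv u v) (z : ℕ) : z ∈ u ↔ z ∈ v := by
  induction h with
  | sq w => simp
  | refl u => rfl
  | symm _ ih => exact ih.symm
  | trans _ _ ih₁ ih₂ => exact ih₁.trans ih₂
  | append _ _ ih₁ ih₂ => simp [ih₁, ih₂]

theorem reverse {u v : Word} (h : BandEquiv u v) : BandEquiv u.reverse v.reverse := by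
  induction h with
  | sq w => simpa using sq w.reverse
  | refl u => exact refl _
  | symm _ ih => exact ih.symm
  | trans _ _ ih₁ ih₂ => exact ih₁.trans ih₂
  | append _ _ ih₁ ih₂ => simpa using ih₂.append ih₁

theorem takeWhile_ne {u v : Word} (h : BandEquiv u v) {z : ℕ} (hz : z ∈ u) :
    BandEquiv (u.takeWhile (· ≠ z)) (v.takeWhile (· ≠ z)) := by
  induction h with
  | sq w => rw [List.takeWhile_ne_append_of_mem w hz]; exact refl _
  | refl u => exact refl _
  | symm h ih => exact (ih ((h.mem_iff z).2 hz)).symm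
  | trans h₁ _ ih₁ ih₂ => exact (ih₁ hz).trans (ih₂ ((h₁.mem_iff z).1 hz))
  | @append a b c d h₁ h₂ ih₁ ih₂ =>
    by_cases ha : z ∈ a
    · rw [List.takeWhile_ne_append_of_mem c ha,
        List.takeWhile_ne_append_of_mem d ((h₁.mem_iff z).1 ha)]
      exact ih₁ ha
    · have hb : z ∉ b := fun hb => ha ((h₁.mem_iff z).2 hb)
      rw [List.takeWhile_append_of_pos fun x hx => by simpa using ne_of_mem_of_not_mem hx ha,
        List.takeWhile_append_of_pos fun x hx => by simpa using ne_of_mem_of_not_mem hx hb]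
      exact h₁.append (ih₂ (by simpa [ha] using hz))

theorem of_append_cons {z : ℕ} {u₁ u₂ v₁ v₂ : Word}
    (h : BandEquiv (u₁ ++ z :: u₂) (v₁ ++ z :: v₂))
    (hu₁ : z ∉ u₁) (hu₂ : z ∉ u₂) (hv₁ : z ∉ v₁) (hv₂ : z ∉ v₂) :
    BandEquiv u₁ v₁ ∧ BandEquiv u₂ v₂ := by
  constructor
  · have := h.takeWhile_ne (z := z) (by simp)
    rwa [List.takeWhile_ne_append_cons _ hu₁, List.takeWhile_ne_append_cons _ hv₁] at this
  · have := h.reverse.takeWhile_ne (z := z) (by simp)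
    simp only [List.reverse_append, List.reverse_cons, List.append_assoc,
      List.singleton_append] at this
    rw [List.takeWhile_ne_append_cons _ (by simpa using hu₂),
      List.takeWhile_ne_append_cons _ (by simpa using hv₂)] at this
    simpa using this.reverse

end BandEquiv

def freeBandCon : Con (FreeMonoid ℕ) where
  r u v := BandEquiv u.toList v.toList
  iseqv := ⟨fun _ => .refl _, .symm, .trans⟩
  mul' := .append

abbrev FreeBand : Type := freeBandCon.Quotient

theorem FreeBand.satisfiesSet_idempotent : SatisfiesSet FreeBand {([0], [0, 0])} := by
  rintro _ rfl φ
  simp only [List.map_cons, List.map_nil, List.prod_cons, List.prod_nil, mul_one]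
  induction φ 0 using Con.induction_on with
  | H w => exact (Con.eq _).2 (BandEquiv.sq w.toList)

theorem bandEquiv_of_satisfies_freeBand {u v : Word} (h : Satisfies FreeBand (u, v)) :
    BandEquiv u v := by
  have eval_of : ∀ w : Word,
      (w.map fun n => ((FreeMonoid.of n : FreeMonoid ℕ) : FreeBand)).prod =
        (FreeMonoid.ofList w : FreeBand) := by
    intro w
    induction w with
    | nil => rfl
    | cons n w ih => simp [ih, FreeMonoid.ofList_cons, Con.coe_mul]
  have := h fun n => ((FreeMonoid.of n : FreeMonoid ℕ) : FreeBand)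
  simp only [eval_of] at this
  exact (Con.eq _).1 this

section Evaluation

variable {M : Type*} [Monoid M] (φ : ℕ → M)

def eval (w : Word) : M := (w.map φ).prod

@[simp] theorem eval_nil : eval φ [] = 1 := rfl

@[simp] theorem eval_cons (a : ℕ) (w : Word) : eval φ (a :: w) = φ a * eval φ w := by
  simp [eval]

@[simp] theorem eval_append (u v : Word) : eval φ (u ++ v) = eval φ u * eval φ v := by
  simp [eval]

variable [IsGammaMonoid M]

theorem eval_append_cons_cons_of_mem {a : ℕ} {X Y : Word} (h : a ∈ X ∨ a ∈ Y) :
    eval φ (X ++ a :: a :: Y) = eval φ (X ++ a :: Y) := by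
  rcases h with hX | hY
  · obtain ⟨X₁, X₂, rfl⟩ := List.append_of_mem hX
    simpa [mul_assoc] using congrArg (eval φ X₁ * · * eval φ Y)
      (IsGammaMonoid.mul_mul_self_right (φ a) (eval φ X₂))
  · obtain ⟨Y₁, Y₂, rfl⟩ := List.append_of_mem hY
    simpa [mul_assoc] using congrArg (eval φ X * · * eval φ Y₂)
      (IsGammaMonoid.mul_self_mul_left (φ a) (eval φ Y₁))

theorem eval_append_self {X Y w : Word} (h : ∀ z ∈ w, z ∉ X → z ∉ Y → w.count z ≠ 1) :
    eval φ (X ++ w ++ w ++ Y) = eval φ (X ++ w ++ Y) := by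
  induction w using List.reverseRecOn generalizing Y with
  | nil => simp
  | append_singleton w a ih =>
    have ha : a ∈ X ++ w ∨ a ∈ Y := by
      by_contra! hout
      simp only [List.mem_append, not_or] at hout
      exact h a (by simp) hout.1.1 hout.2 (by simp [List.count_eq_zero_of_not_mem hout.1.2])
    have hw : ∀ z ∈ w, z ∉ X → z ∉ a :: a :: Y → w.count z ≠ 1 := by
      intro z hz hX hY
      have hza : z ≠ a := fun h => hY (by simp [h])
      simpa [List.count_append, List.count_singleton, hza.symm] using
        h z (by simp [hz]) hX (fun h => hY (by simp [h]))
    calc eval φ (X ++ (w ++ [a]) ++ (w ++ [a]) ++ Y)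
        = eval φ (X ++ w ++ w ++ a :: a :: Y) := by
          simpa [mul_assoc] using congrArg (eval φ X * · * eval φ Y)
            (IsGammaMonoid.mul_mul_mul_self (eval φ w) (φ a))
      _ = eval φ (X ++ w ++ a :: a :: Y) := ih hw
      _ = eval φ (X ++ w ++ a :: Y) := eval_append_cons_cons_of_mem φ ha
      _ = eval φ (X ++ (w ++ [a]) ++ Y) := by simp

theorem BandEquiv.eval_eq_of_subset {u v : Word} (h : BandEquiv u v) {X Y : Word}
    (hc : u ⊆ X ++ Y) : eval φ (X ++ u ++ Y) = eval φ (X ++ v ++ Y) := by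
  induction h generalizing X Y with
  | sq w =>
    refine (eval_append_self φ fun z hz hX hY => ?_).symm.trans (by simp)
    simpa [hX, hY] using hc hz
  | refl u => rfl
  | symm h ih => exact (ih fun z hz => hc ((h.mem_iff z).1 hz)).symm
  | trans h₁ _ ih₁ ih₂ =>
    exact (ih₁ hc).trans (ih₂ fun z hz => hc ((h₁.mem_iff z).2 hz))
  | @append a b c d _ _ ih₁ ih₂ =>
    calc eval φ (X ++ (a ++ c) ++ Y) = eval φ (X ++ a ++ (c ++ Y)) := by simp
      _ = eval φ (X ++ b ++ (c ++ Y)) := ih₁ fun z hz => by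
          rcases List.mem_append.1 (hc (List.mem_append_left c hz)) with h | h <;> simp [h]
      _ = eval φ (X ++ b ++ c ++ Y) := by simp
      _ = eval φ (X ++ b ++ d ++ Y) := ih₂ fun z hz => by
          rcases List.mem_append.1 (hc (List.mem_append_right a hz)) with h | h <;> simp [h]
      _ = eval φ (X ++ (b ++ d) ++ Y) := by simp

theorem BandEquiv.eval_eq_of_count_ne_one {u v X Y : Word} (h : BandEquiv u v)
    (hu : ∀ z ∈ u, z ∉ X → z ∉ Y → u.count z ≠ 1)
    (hv : ∀ z ∈ v, z ∉ X → z ∉ Y → v.count z ≠ 1) :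
    eval φ (X ++ u ++ Y) = eval φ (X ++ v ++ Y) :=
  calc eval φ (X ++ u ++ Y) = eval φ (X ++ u ++ (u ++ Y)) := by
        rw [← eval_append_self φ hu]; simp
    _ = eval φ (X ++ v ++ (u ++ Y)) := h.eval_eq_of_subset φ fun z hz => by simp [hz]
    _ = eval φ ((X ++ v) ++ u ++ Y) := by simp
    _ = eval φ ((X ++ v) ++ v ++ Y) :=
        h.eval_eq_of_subset φ fun z hz => by simp [(h.mem_iff z).1 hz]
    _ = eval φ (X ++ v ++ Y) := eval_append_self φ hv

theorem BandEquiv.eval_eq_of_count_eq_one_iff {u v : Word} (h : BandEquiv u v) (X Y : Word)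
    (hs : ∀ z ∈ u, z ∉ X → z ∉ Y → (u.count z = 1 ↔ v.count z = 1)) :
    eval φ (X ++ u ++ Y) = eval φ (X ++ v ++ Y) := by
  induction hn : u.length using Nat.strong_induction_on generalizing u v X Y with
  | _ n ih =>
  by_cases hsimple : ∃ z ∈ u, z ∉ X ∧ z ∉ Y ∧ u.count z = 1
  swap
  · push Not at hsimple
    refine h.eval_eq_of_count_ne_one φ hsimple fun z hz hX hY hv => ?_
    have hzu := (h.mem_iff z).2 hz
    exact hsimple z hzu hX hY ((hs z hzu hX hY).2 hv)
  obtain ⟨z, hz, hX, hY, hu⟩ := hsimple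
  obtain ⟨u₁, u₂, rfl, hu₁, hu₂⟩ := List.exists_append_cons_of_count_eq_one hu
  obtain ⟨v₁, v₂, rfl, hv₁, hv₂⟩ :=
    List.exists_append_cons_of_count_eq_one ((hs z hz hX hY).1 hu)
  obtain ⟨h₁, h₂⟩ := h.of_append_cons hu₁ hu₂ hv₁ hv₂
  have hs₁ : ∀ x ∈ u₁, x ∉ X → x ∉ z :: u₂ ++ Y →
      (u₁.count x = 1 ↔ v₁.count x = 1) := by
    intro x hx hxX hxR
    have hxz : x ≠ z := fun h => hxR (by simp [h])
    have hxu : x ∉ u₂ := fun h => hxR (by simp [h])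
    have hxv : x ∉ v₂ := fun h => hxu ((h₂.mem_iff x).2 h)
    simpa [List.count_cons, hxz.symm, List.count_eq_zero_of_not_mem hxu,
      List.count_eq_zero_of_not_mem hxv] using
      hs x (by simp [hx]) hxX (fun h => hxR (by simp [h]))
  have hs₂ : ∀ x ∈ u₂, x ∉ X ++ v₁ ++ [z] → x ∉ Y →
      (u₂.count x = 1 ↔ v₂.count x = 1) := by
    intro x hx hxL hxY
    have hxz : x ≠ z := fun h => hxL (by simp [h])
    have hxv : x ∉ v₁ := fun h => hxL (by simp [h])
    have hxu : x ∉ u₁ := fun h => hxv ((h₁.mem_iff x).1 h)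
    simpa [List.count_cons, hxz.symm, List.count_eq_zero_of_not_mem hxu,
      List.count_eq_zero_of_not_mem hxv] using
      hs x (by simp [hx]) (fun h => hxL (by simp [h])) hxY
  calc eval φ (X ++ (u₁ ++ z :: u₂) ++ Y) = eval φ (X ++ u₁ ++ (z :: u₂ ++ Y)) := by simp
    _ = eval φ (X ++ v₁ ++ (z :: u₂ ++ Y)) := ih _ (by simp [← hn]) h₁ _ _ hs₁ rfl
    _ = eval φ (X ++ v₁ ++ [z] ++ u₂ ++ Y) := by simp
    _ = eval φ (X ++ v₁ ++ [z] ++ v₂ ++ Y) := ih _ (by simp [← hn]; omega) h₂ _ _ hs₂ rfl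
    _ = eval φ (X ++ (v₁ ++ z :: v₂) ++ Y) := by simp

end Evaluation

/-- An identity holds in `Q¹` and in every idempotent monoid iff
it is a consequence of `Γ = {xtx ≈ xtx², xtx ≈ x²tx, (xy)² ≈ x²y²}`;
i.e., `Q¹ ∨ B¹ = var Γ`. -/
theorem statement4 (e : Eqn) :
    (Satisfies Q1 e ∧
      ∀ (M : Type) [Monoid M], SatisfiesSet M ({([0], [0, 0])} : Set Eqn) → Satisfies M e) ↔
    Consequence Gamma e := by
  obtain ⟨u, v⟩ := e
  constructor
  · rintro ⟨hQ, hband⟩ M _ hM φ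
    have : IsGammaMonoid M := isGammaMonoid_iff_satisfiesSet.2 hM
    have hB := bandEquiv_of_satisfies_freeBand (hband _ FreeBand.satisfiesSet_idempotent)
    simpa [eval] using hB.eval_eq_of_count_eq_one_iff φ [] []
      fun z _ _ _ => count_eq_one_iff_of_satisfies_Q1 hQ z
  · intro h
    refine ⟨h Q1 (isGammaMonoid_iff_satisfiesSet.1 inferInstance), fun M _ hM => h M ?_⟩
    refine isGammaMonoid_iff_satisfiesSet.1 (IsGammaMonoid.of_mul_self fun x => ?_)
    simpa using (hM _ rfl fun _ => x).symm
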